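/- Let S = ℚ[x, y, z] and let M′ ⊆ S^4 be the submodule of tuples (g_0, g_1, g_2, g_3) satisfying: (x + y − z) divides g_0 − g_1, (3x − y + z) divides g_0 − g_2, (x − y − z) divides g_0 − g_3, x divides g_1 − g_2, (4x − 5y − 6z) divides g_2 − g_3, and y divides g_1 − g_3. Then there exists K such that for all k ≥ K, the ℚ-vector space of elements of M′ all of whose components are homogeneous of degree k has dimension exactly 2k² + 1; i.e., the Hilbert polynomial of M′ is 2k² + 1. In particular M′ is not isomorphic to the spline module of the combinatorially equivalent fan with concurrent connecting lines, whose Hilbert polynomial is 2k² + 2: the Hilbert polynomial of C^0(Σ) depends on the geometry, not just the combinatorics, of the fan Σ. -/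

import Mathlib

/-!
Write `ℓᵢ` for the form of the wall `P₀ ∩ Pᵢ` and `L = 4x - 5y - 6z`. Minus the constant spline
`g₀`, a spline `g ∈ M'` is `(0, ℓ₁ a, ℓ₂ b, ℓ₃ c)`. Since `ℓ₁ ≡ -ℓ₂ mod x`, `ℓ₁ ≡ ℓ₃ mod y`, `ℓ₂ ≡ 11 ℓ₃ mod L`
and `x`, `y`, `L` are primes dividing none of the `ℓᵢ`, the remaining conditions say exactly
`x ∣ a + b`, `y ∣ c - a`, `L ∣ c - 11 b`. The three quotients are arbitrary, so `M'` is free on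
generators of degrees `0, 2, 2, 2` and its Hilbert function is `C(k+2, 2) + 3 C(k, 2) = 2k² + 1`
for `k ≥ 2`. For `M`, independent splines of degrees `0, 1, 2, 3` give
`dim M_3 ≥ 20 > 19 = dim M'_3`, so no graded isomorphism exists.
-/

open MvPolynomial

/-- The ring `S = ℚ[x, y, z]`. -/
abbrev S : Type := MvPolynomial (Fin 3) ℚ

/-- The Billera–Rose submodule of `S^N` cut out by a list of conditions
`(ℓ, a, b)`, each requiring `ℓ ∣ g_a - g_b`. -/
noncomputable def splineBR {N : ℕ} (conds : List (S × Fin N × Fin N)) :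
    Submodule S (Fin N → S) where
  carrier := {g | ∀ c ∈ conds, c.1 ∣ g c.2.1 - g c.2.2}
  add_mem' := by
    intro a b ha hb c hc
    simpa [sub_add_sub_comm] using dvd_add (ha c hc) (hb c hc)
  zero_mem' := by
    intro c hc
    simp
  smul_mem' := by
    intro r g hg c hc
    simpa [smul_eq_mul, mul_sub] using (hg c hc).mul_left r

/-- The spline module `M′ = C^0(Σ′) ⊆ S^4` of the cone `Σ′` over the perturbed
(generic) triangle-in-triangle complex: tuples `(g_0, g_1, g_2, g_3)` with
`x+y-z ∣ g_0-g_1`, `3x-y+z ∣ g_0-g_2`, `x-y-z ∣ g_0-g_3`, `x ∣ g_1-g_2`,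
`4x-5y-6z ∣ g_2-g_3`, `y ∣ g_1-g_3`. -/
noncomputable def M' : Submodule S (Fin 4 → S) :=
  splineBR [(X 0 + X 1 - X 2, 0, 1), (3 * X 0 - X 1 + X 2, 0, 2),
    (X 0 - X 1 - X 2, 0, 3), (X 0, 1, 2), (4 * X 0 - 5 * X 1 - 6 * X 2, 2, 3), (X 1, 1, 3)]

/-- The spline module `M = C^0(Σ)` of the combinatorially equivalent symmetric fan `Σ`
(with the three connecting lines concurrent), whose Hilbert polynomial is `2k² + 2`. -/
noncomputable def M : Submodule S (Fin 4 → S) :=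
  splineBR [(X 0 + X 1 - X 2, 0, 1), (2 * X 0 - X 1 + X 2, 0, 2),
    (X 0 - 2 * X 1 - X 2, 0, 3), (X 0, 1, 2), (X 0 - X 1, 2, 3), (X 1, 1, 3)]

/-- The `ℚ`-vector space of elements of a submodule `P ⊆ S^4` all of whose components
are homogeneous of degree `k` (or zero). -/
noncomputable def homPart (P : Submodule S (Fin 4 → S)) (k : ℕ) :
    Submodule ℚ (Fin 4 → S) :=
  (Submodule.restrictScalars ℚ P) ⊓
    Submodule.pi Set.univ (fun _ : Fin 4 => homogeneousSubmodule (Fin 3) ℚ k)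

open Matrix

namespace MvPolynomial

variable {σ R K : Type*} [CommSemiring R] [Field K]

theorem isHomogeneous_ofNat (n : ℕ) [n.AtLeastTwo] :
    (ofNat(n) : MvPolynomial σ R).IsHomogeneous 0 :=
  map_ofNat (C : R →+* MvPolynomial σ R) n ▸ isHomogeneous_C σ _

theorem IsHomogeneous.mul_of_add_eq {φ ψ : MvPolynomial σ R} {m n k : ℕ}
    (hφ : φ.IsHomogeneous m) (hψ : ψ.IsHomogeneous n) (h : m + n = k) :
    (φ * ψ).IsHomogeneous k :=
  h ▸ hφ.mul hψ

theorem homogeneousComponent_mul_of_isHomogeneous_left {a b : MvPolynomial σ R} {d n : ℕ}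
    (ha : a.IsHomogeneous d) (hdn : d ≤ n) :
    homogeneousComponent n (a * b) = a * homogeneousComponent (n - d) b := by
  let := gradedAlgebra (σ := σ) (R := R)
  rw [← decomposition.decompose'_apply, ← decomposition.decompose'_apply]
  exact DirectSum.coe_decompose_mul_of_left_mem_of_le (𝒜 := homogeneousSubmodule σ R) ha hdn

instance [Finite σ] (n : ℕ) : FiniteDimensional K (homogeneousSubmodule σ K n) :=
  Module.Finite.iff_fg.mpr (homogeneousSubmodule_fg σ K n)

theorem finrank_homogeneousSubmodule [Fintype σ] (n : ℕ) :
    Module.finrank K (homogeneousSubmodule σ K n) = (Fintype.card σ).multichoose n := by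
  classical
  let e : Sym σ n ≃ {d : σ →₀ ℕ | d.degree = n} := Sym.equivNatSum σ n
  have := Fintype.ofEquiv _ e
  rw [homogeneousSubmodule_eq_finsupp_supported,
    (AddMonoidAlgebra.supportedEquivFinsupp _).finrank_eq, Module.finrank_finsupp_self,
    ← Fintype.card_congr e, Sym.card_sym_eq_multichoose]

theorem prime_of_isHomogeneous_one {p : MvPolynomial σ K} (hp : p.IsHomogeneous 1) (hp0 : p ≠ 0) :
    Prime p := by
  refine (irreducible_of_totalDegree_eq_one (hp.totalDegree hp0) fun c hc => ?_).prime
  obtain ⟨m, hm⟩ := ne_zero_iff.mp hp0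
  exact (ne_zero_of_dvd_ne_zero hm (hc m)).isUnit

theorem not_dvd_of_eval_eq_zero {l p : MvPolynomial σ R} (v : σ → R) (hl : eval v l = 0)
    (hp : eval v p ≠ 0) : ¬ l ∣ p := fun h =>
  hp (zero_dvd_iff.mp (hl ▸ map_dvd (eval v) h))

end MvPolynomial

theorem Nat.two_mul_multichoose_three (n : ℕ) :
    2 * (3 : ℕ).multichoose n = (n + 2) * (n + 1) := by
  rw [Nat.multichoose_eq, show 3 + n - 1 = n + 2 by omega, Nat.choose_symm_add]
  have := Nat.add_one_mul_choose_eq (n + 1) 1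
  rw [Nat.choose_one_right] at this
  linarith

theorem mem_homPart {P : Submodule S (Fin 4 → S)} {k : ℕ} {g : Fin 4 → S} :
    g ∈ homPart P k ↔ g ∈ P ∧ ∀ j, (g j).IsHomogeneous k := by
  simp [homPart, Submodule.mem_pi, mem_homogeneousSubmodule]

instance (P : Submodule S (Fin 4 → S)) (k : ℕ) : FiniteDimensional ℚ (homPart P k) :=
  Module.Finite.of_injective
    (LinearMap.pi fun j => ((LinearMap.proj j).comp (homPart P k).subtype).codRestrict
      (homogeneousSubmodule (Fin 3) ℚ k) fun g => (mem_homPart.mp g.2).2 j)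
    fun _ _ h => Subtype.ext (funext fun j => congrArg Subtype.val (congrFun h j))

theorem finrank_homPart_le_of_injective {P Q : Submodule S (Fin 4 → S)} (f : P →ₗ[S] Q)
    (hf : Function.Injective f)
    (hhom : ∀ (k : ℕ) (v : P), (∀ j, ((v : Fin 4 → S) j).IsHomogeneous k) →
      ∀ j, ((f v : Fin 4 → S) j).IsHomogeneous k) (k : ℕ) :
    Module.finrank ℚ (homPart P k) ≤ Module.finrank ℚ (homPart Q k) := by
  let toP (v : homPart P k) : P := ⟨v, (mem_homPart.mp v.2).1⟩
  let fk : homPart P k →ₗ[ℚ] homPart Q k :=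
    { toFun v := ⟨f (toP v), mem_homPart.mpr ⟨(f _).2, hhom k _ (mem_homPart.mp v.2).2⟩⟩
      map_add' v w := Subtype.ext (congrArg Subtype.val (map_add f (toP v) (toP w)) :)
      map_smul' c v := Subtype.ext (congrArg Subtype.val (f.map_smul_of_tower c (toP v)) :) }
  refine LinearMap.finrank_le_finrank_of_injective (f := fk) fun v w h => ?_
  have : toP v = toP w := hf (Subtype.ext (congrArg Subtype.val h :))
  exact Subtype.ext (congrArg Subtype.val this :)

section Generators

variable {κ : Type*} [Fintype κ] (P : Submodule S (Fin 4 → S)) (B : Matrix (Fin 4) κ S)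
  (d : κ → ℕ) (k : ℕ)

noncomputable def homPartMulVec (hBP : ∀ c, B *ᵥ c ∈ P)
    (hB : ∀ j i, (B j i).IsHomogeneous (d i)) (hdk : ∀ i, d i ≤ k) :
    (Π i, homogeneousSubmodule (Fin 3) ℚ (k - d i)) →ₗ[ℚ] homPart P k :=
  LinearMap.codRestrict _ ((B.mulVecLin.restrictScalars ℚ).comp
      (LinearMap.pi fun i => (Submodule.subtype _).comp (LinearMap.proj i)))
    fun c => mem_homPart.mpr ⟨hBP _, fun j => IsHomogeneous.sum _ _ _ fun i _ =>
      (hB j i).mul_of_add_eq (c i).2 (Nat.add_sub_cancel' (hdk i))⟩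

variable {P B d k}

theorem homPartMulVec_injective (hBP : ∀ c, B *ᵥ c ∈ P)
    (hB : ∀ j i, (B j i).IsHomogeneous (d i)) (hdk : ∀ i, d i ≤ k)
    (hinj : Function.Injective B.mulVec) :
    Function.Injective (homPartMulVec P B d k hBP hB hdk) := fun _ _ h =>
  funext fun i => Subtype.ext (congrFun (hinj (congrArg Subtype.val h)) i)

/-- The degree-`k` part of `B *ᵥ c` is `B *ᵥ c'`, where `c' i` is the degree-`(k - d i)` part
of `c i`. -/
theorem homPartMulVec_surjective (hBP : ∀ c, B *ᵥ c ∈ P)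
    (hB : ∀ j i, (B j i).IsHomogeneous (d i)) (hdk : ∀ i, d i ≤ k)
    (hsurj : ∀ g ∈ P, ∃ c, B *ᵥ c = g) :
    Function.Surjective (homPartMulVec P B d k hBP hB hdk) := by
  rintro ⟨g, hg⟩
  obtain ⟨hgP, hgk⟩ := mem_homPart.mp hg
  obtain ⟨c, rfl⟩ := hsurj g hgP
  refine ⟨fun i => ⟨homogeneousComponent (k - d i) (c i), homogeneousComponent_mem _ _⟩,
    Subtype.ext (funext fun j => ?_)⟩
  change (B *ᵥ fun i => homogeneousComponent (k - d i) (c i)) j = (B *ᵥ c) j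
  rw [← homogeneousComponent_eq_self (hgk j)]
  simp only [mulVec, dotProduct, map_sum]
  exact Finset.sum_congr rfl fun i _ =>
    (homogeneousComponent_mul_of_isHomogeneous_left (hB j i) (hdk i)).symm

theorem finrank_homPart_eq_sum (hBP : ∀ c, B *ᵥ c ∈ P)
    (hB : ∀ j i, (B j i).IsHomogeneous (d i)) (hdk : ∀ i, d i ≤ k)
    (hinj : Function.Injective B.mulVec) (hsurj : ∀ g ∈ P, ∃ c, B *ᵥ c = g) :
    Module.finrank ℚ (homPart P k) = ∑ i, (3 : ℕ).multichoose (k - d i) := by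
  rw [← (LinearEquiv.ofBijective _ ⟨homPartMulVec_injective hBP hB hdk hinj,
    homPartMulVec_surjective hBP hB hdk hsurj⟩).finrank_eq, Module.finrank_pi_fintype]
  simp [finrank_homogeneousSubmodule]

theorem sum_le_finrank_homPart (hBP : ∀ c, B *ᵥ c ∈ P)
    (hB : ∀ j i, (B j i).IsHomogeneous (d i)) (hdk : ∀ i, d i ≤ k)
    (hinj : Function.Injective B.mulVec) :
    ∑ i, (3 : ℕ).multichoose (k - d i) ≤ Module.finrank ℚ (homPart P k) := by
  have := LinearMap.finrank_le_finrank_of_injective (homPartMulVec_injective hBP hB hdk hinj)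
  simpa [Module.finrank_pi_fintype, finrank_homogeneousSubmodule] using this

end Generators

theorem mem_M' {g : Fin 4 → S} :
    g ∈ M' ↔ (X 0 + X 1 - X 2 ∣ g 0 - g 1) ∧ (3 * X 0 - X 1 + X 2 ∣ g 0 - g 2) ∧
      (X 0 - X 1 - X 2 ∣ g 0 - g 3) ∧ (X 0 ∣ g 1 - g 2) ∧
      (4 * X 0 - 5 * X 1 - 6 * X 2 ∣ g 2 - g 3) ∧ (X 1 ∣ g 1 - g 3) := by
  simp [M', splineBR]

theorem prime_four_X0_sub_five_X1_sub_six_X2 : Prime (4 * X 0 - 5 * X 1 - 6 * X 2 : S) := by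
  refine prime_of_isHomogeneous_one ?_ fun h => by simpa using congrArg (eval ![1, 0, 0]) h
  exact (((isHomogeneous_ofNat 4).mul_of_add_eq (isHomogeneous_X ℚ 0) rfl).sub
    ((isHomogeneous_ofNat 5).mul_of_add_eq (isHomogeneous_X ℚ 1) rfl)).sub
    ((isHomogeneous_ofNat 6).mul_of_add_eq (isHomogeneous_X ℚ 2) rfl)

/-- The last three columns are the splines `(0, ℓ₁ a, ℓ₂ b, ℓ₃ c)` with `(a + b, c - a, c - 11 b)`
equal to `(12x, 0, 0)`, `(0, -12y, 0)`, `(0, 0, -12L)`. -/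
noncomputable def splineMatrixM' : Matrix (Fin 4) (Fin 4) S :=
  !![1, 0, 0, 0;
    1, 11 * X 0 * (X 0 + X 1 - X 2), X 1 * (X 0 + X 1 - X 2),
      -((4 * X 0 - 5 * X 1 - 6 * X 2) * (X 0 + X 1 - X 2));
    1, X 0 * (3 * X 0 - X 1 + X 2), -(X 1 * (3 * X 0 - X 1 + X 2)),
      (4 * X 0 - 5 * X 1 - 6 * X 2) * (3 * X 0 - X 1 + X 2);
    1, 11 * X 0 * (X 0 - X 1 - X 2), -(11 * X 1 * (X 0 - X 1 - X 2)),
      -((4 * X 0 - 5 * X 1 - 6 * X 2) * (X 0 - X 1 - X 2))]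

theorem splineMatrixM'_mulVec_mem (c : Fin 4 → S) : splineMatrixM' *ᵥ c ∈ M' := by
  simp only [splineMatrixM', cons_mulVec, dotProduct, Fin.sum_univ_four, cons_val_zero, one_mul,
    cons_val_one, zero_mul, add_zero, cons_val, neg_mul, empty_mulVec, mem_M']
  refine ⟨Dvd.intro (-(11 * X 0 * c 1 + X 1 * c 2 - (4 * X 0 - 5 * X 1 - 6 * X 2) * c 3)) ?_,
    Dvd.intro (-(X 0 * c 1 - X 1 * c 2 + (4 * X 0 - 5 * X 1 - 6 * X 2) * c 3)) ?_,
    Dvd.intro (-(11 * X 0 * c 1 - 11 * X 1 * c 2 - (4 * X 0 - 5 * X 1 - 6 * X 2) * c 3)) ?_,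
    Dvd.intro ((8 * X 0 + 12 * X 1 - 12 * X 2) * c 1 + 4 * X 1 * c 2 -
      4 * (4 * X 0 - 5 * X 1 - 6 * X 2) * c 3) ?_,
    Dvd.intro (-2 * X 0 * c 1 + 2 * X 1 * c 2 + (4 * X 0 - 2 * X 1) * c 3) ?_,
    Dvd.intro (22 * X 0 * c 1 + (12 * X 0 - 10 * X 1 - 12 * X 2) * c 2 -
      2 * (4 * X 0 - 5 * X 1 - 6 * X 2) * c 3) ?_⟩ <;> ring

theorem splineMatrixM'_isHomogeneous (j i : Fin 4) :
    (splineMatrixM' j i).IsHomogeneous (![0, 2, 2, 2] i) := by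
  -- Reducible transparency makes the many failing `apply`s below fail fast.
  fin_cases j <;> fin_cases i <;>
    simp only [splineMatrixM', of_apply, cons_val', cons_val_fin_one, cons_val_zero, cons_val_one,
      cons_val, Fin.isValue, Fin.reduceFinMk, Fin.zero_eta, Fin.mk_one, Nat.succ_eq_add_one,
      Nat.reduceAdd] <;>
    repeat' first
      | with_reducible_and_instances exact isHomogeneous_X ℚ _
      | with_reducible_and_instances exact isHomogeneous_ofNat _
      | with_reducible_and_instances exact isHomogeneous_one _ _
      | with_reducible_and_instances exact isHomogeneous_zero _ _ _
      | with_reducible_and_instances apply IsHomogeneous.add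
      | with_reducible_and_instances apply IsHomogeneous.sub
      | with_reducible_and_instances apply IsHomogeneous.neg
      | with_reducible_and_instances apply IsHomogeneous.mul_of_add_eq
      | rfl

theorem splineMatrixM'_mulVec_injective : Function.Injective splineMatrixM'.mulVec :=
  mulVec_injective_of_det_ne_zero fun h => by
    have := congrArg (eval ![1, 2, 0]) h
    rw [RingHom.map_det] at this
    simp [splineMatrixM', det_succ_row_zero, Fin.sum_univ_succ] at this
    norm_num at this

theorem exists_splineMatrixM'_mulVec_eq {g : Fin 4 → S} (hg : g ∈ M') :
    ∃ c, splineMatrixM' *ᵥ c = g := by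
  obtain ⟨⟨a, ha⟩, ⟨b, hb⟩, ⟨c, hc⟩, h12, h23, h13⟩ := mem_M'.mp hg
  have hx : X 0 ∣ (X 1 - X 2) * (a + b) := by
    have e : (X 1 - X 2) * (a + b) = X 0 * (3 * b - a) - (g 1 - g 2) := by
      linear_combination hb - ha
    exact e ▸ dvd_sub (dvd_mul_right _ _) h12
  obtain ⟨q, hq⟩ := (X_prime.dvd_mul.mp hx).resolve_left
    (not_dvd_of_eval_eq_zero ![0, 1, 0] (by simp) (by simp))
  have hy : X 1 ∣ (X 0 - X 2) * (c - a) := by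
    have e : (X 0 - X 2) * (c - a) = (g 1 - g 3) + X 1 * (a + c) := by
      linear_combination ha - hc
    exact e ▸ dvd_add h13 (dvd_mul_right _ _)
  obtain ⟨r, hr⟩ := (X_prime.dvd_mul.mp hy).resolve_left
    (not_dvd_of_eval_eq_zero ![1, 0, 0] (by simp) (by simp))
  have hL : 4 * X 0 - 5 * X 1 - 6 * X 2 ∣ (X 1 + 2 * X 2) * (c - 11 * b) := by
    have e : (X 1 + 2 * X 2) * (c - 11 * b) =
        4 * (g 2 - g 3) - (4 * X 0 - 5 * X 1 - 6 * X 2) * (c - 3 * b) := by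
      linear_combination 4 * hb - 4 * hc
    exact e ▸ dvd_sub (dvd_mul_of_dvd_right h23 _) (dvd_mul_right _ _)
  obtain ⟨s, hs⟩ := (prime_four_X0_sub_five_X1_sub_six_X2.dvd_mul.mp hL).resolve_left
    (not_dvd_of_eval_eq_zero ![3, 0, 2] (by simp; norm_num) (by simp))
  have h12 : (12 : S) * C 12⁻¹ = 1 := by
    rw [← map_ofNat C, ← map_mul]; norm_num
  refine ⟨![g 0, -(C 12⁻¹ * q), C 12⁻¹ * r, C 12⁻¹ * s], funext fun j => ?_⟩
  fin_cases j <;>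
    simp only [splineMatrixM', cons_mulVec, dotProduct, Fin.sum_univ_four, cons_val_zero, one_mul,
      cons_val_one, zero_mul, add_zero, cons_val, neg_mul, empty_mulVec, Fin.isValue, Fin.zero_eta,
      Fin.mk_one, Fin.reduceFinMk]
  · linear_combination ha - (X 0 + X 1 - X 2) * a * h12 +
      (X 0 + X 1 - X 2) * C 12⁻¹ * (11 * hq - hr + hs)
  · linear_combination hb - (3 * X 0 - X 1 + X 2) * b * h12 +
      (3 * X 0 - X 1 + X 2) * C 12⁻¹ * (hq + hr - hs)
  · linear_combination hc - (X 0 - X 1 - X 2) * c * h12 +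
      (X 0 - X 1 - X 2) * C 12⁻¹ * (11 * hq + 11 * hr + hs)

theorem finrank_homPart_M' {k : ℕ} (hk : 2 ≤ k) :
    Module.finrank ℚ (homPart M' k) = 2 * k ^ 2 + 1 := by
  have hdk : ∀ i, ![0, 2, 2, 2] i ≤ k := by intro i; fin_cases i <;> simp [hk]
  rw [finrank_homPart_eq_sum splineMatrixM'_mulVec_mem splineMatrixM'_isHomogeneous hdk
    splineMatrixM'_mulVec_injective fun _ => exists_splineMatrixM'_mulVec_eq]
  obtain ⟨m, rfl⟩ := Nat.exists_eq_add_of_le' hk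
  have h₁ := Nat.two_mul_multichoose_three (m + 2)
  have h₂ := Nat.two_mul_multichoose_three m
  simp only [Fin.sum_univ_four, cons_val, Nat.sub_zero, Nat.add_sub_cancel]
  nlinarith

theorem mem_M {g : Fin 4 → S} :
    g ∈ M ↔ (X 0 + X 1 - X 2 ∣ g 0 - g 1) ∧ (2 * X 0 - X 1 + X 2 ∣ g 0 - g 2) ∧
      (X 0 - 2 * X 1 - X 2 ∣ g 0 - g 3) ∧ (X 0 ∣ g 1 - g 2) ∧ (X 0 - X 1 ∣ g 2 - g 3) ∧
      (X 1 ∣ g 1 - g 3) := by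
  simp [M, splineBR]

noncomputable def splineMatrixM : Matrix (Fin 4) (Fin 4) S :=
  !![1, 0, 0, 0;
    1, X 0 + X 1 - X 2, 0, 0;
    1, -(2 * X 0 - X 1 + X 2), (2 * X 0 - X 1 + X 2) * X 0, (2 * X 0 - X 1 + X 2) * X 0 * X 2;
    1, X 0 - 2 * X 1 - X 2, -((X 0 - 2 * X 1 - X 2) * X 1),
      (X 0 - 2 * X 1 - X 2) * X 1 * (X 0 - X 1 - X 2)]

theorem splineMatrixM_mulVec_mem (c : Fin 4 → S) : splineMatrixM *ᵥ c ∈ M := by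
  simp only [splineMatrixM, cons_mulVec, dotProduct, Fin.sum_univ_four, cons_val_zero, one_mul,
    cons_val_one, zero_mul, add_zero, cons_val, neg_mul, empty_mulVec, mem_M]
  refine ⟨⟨-c 1, ?_⟩, ⟨c 1 - X 0 * c 2 - X 0 * X 2 * c 3, ?_⟩,
    ⟨-c 1 + X 1 * c 2 - X 1 * (X 0 - X 1 - X 2) * c 3, ?_⟩,
    ⟨3 * c 1 - (2 * X 0 - X 1 + X 2) * c 2 - (2 * X 0 - X 1 + X 2) * X 2 * c 3, ?_⟩,
    ⟨-3 * c 1 + (2 * X 0 + 2 * X 1 + X 2) * c 2 +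
      (2 * X 1 ^ 2 - X 0 * X 1 + 2 * X 0 * X 2 + 3 * X 1 * X 2 + X 2 ^ 2) * c 3, ?_⟩,
    ⟨3 * c 1 + (X 0 - 2 * X 1 - X 2) * c 2 -
      (X 0 - 2 * X 1 - X 2) * (X 0 - X 1 - X 2) * c 3, ?_⟩⟩ <;> ring

theorem splineMatrixM_isHomogeneous (j i : Fin 4) :
    (splineMatrixM j i).IsHomogeneous (![0, 1, 2, 3] i) := by
  fin_cases j <;> fin_cases i <;>
    simp only [splineMatrixM, of_apply, cons_val', cons_val_fin_one, cons_val_zero, cons_val_one,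
      cons_val, Fin.isValue, Fin.reduceFinMk, Fin.zero_eta, Fin.mk_one, Nat.succ_eq_add_one,
      Nat.reduceAdd] <;>
    repeat' first
      | with_reducible_and_instances exact isHomogeneous_X ℚ _
      | with_reducible_and_instances exact isHomogeneous_ofNat _
      | with_reducible_and_instances exact isHomogeneous_one _ _
      | with_reducible_and_instances exact isHomogeneous_zero _ _ _
      | with_reducible_and_instances apply IsHomogeneous.add
      | with_reducible_and_instances apply IsHomogeneous.sub
      | with_reducible_and_instances apply IsHomogeneous.neg
      | with_reducible_and_instances apply IsHomogeneous.mul_of_add_eq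
      | rfl

theorem splineMatrixM_mulVec_injective : Function.Injective splineMatrixM.mulVec :=
  mulVec_injective_of_det_ne_zero fun h => by
    have := congrArg (eval ![1, 2, 1]) h
    rw [RingHom.map_det] at this
    simp [splineMatrixM, det_succ_row_zero, Fin.sum_univ_succ] at this
    norm_num at this

theorem twenty_le_finrank_homPart_M_three : 20 ≤ Module.finrank ℚ (homPart M 3) := by
  have hdk : ∀ i, ![0, 1, 2, 3] i ≤ 3 := by decide
  have := sum_le_finrank_homPart splineMatrixM_mulVec_mem splineMatrixM_isHomogeneous hdk
    splineMatrixM_mulVec_injective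
  simpa [Fin.sum_univ_four, Nat.multichoose] using this

/-- **Theorem**: the Hilbert polynomial of `M′ = C^0(Σ′)` is `2k² + 1`; in particular
there is no degree-preserving `S`-module isomorphism between `M′` and the spline module
`M` of the combinatorially equivalent symmetric fan (whose Hilbert polynomial is
`2k² + 2`): the Hilbert polynomial of `C^0(Σ)` depends on the geometry, not just the
combinatorics, of `Σ`. -/
theorem hilbert_polynomial_perturbed_fan :
    (∃ K : ℕ, ∀ k : ℕ, K ≤ k →
      Module.finrank ℚ (homPart M' k) = 2 * k ^ 2 + 1) ∧
    ¬ ∃ e : M' ≃ₗ[S] M,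
        (∀ (k : ℕ) (v : M'), (∀ j, ((v : Fin 4 → S) j).IsHomogeneous k) →
          ∀ j, ((e v : Fin 4 → S) j).IsHomogeneous k) ∧
        (∀ (k : ℕ) (w : M), (∀ j, ((w : Fin 4 → S) j).IsHomogeneous k) →
          ∀ j, ((e.symm w : Fin 4 → S) j).IsHomogeneous k) := by
  refine ⟨⟨2, fun k hk => finrank_homPart_M' hk⟩, ?_⟩
  rintro ⟨e, -, he⟩
  have hle := finrank_homPart_le_of_injective e.symm.toLinearMap e.symm.injective he 3
  have h20 := twenty_le_finrank_homPart_M_three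
  rw [finrank_homPart_M' (by norm_num)] at hle
  omega
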